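/- Let (S_n)_{n≥1} be a real sequence with S_0 = 0, let (η_n)_{n≥1} be positive increasing with η_n^2 comparable to n (i.e., C^{-1} n ≤ η_n^2 ≤ C n for some C ≥ 1), let γ > 1/2 and ε ∈ (0,1). If S_n = O(η_n^{2-(4γ-2)ε}), then the tail sums S'_n := Σ_{i≥n} (S_i − S_{i-1})/η_i^{4γ} satisfy S'_n = O(η_n^{(2-4γ)(1+ε)}). -/

import Mathlib

/-!
Summation by parts (`q = 4γ`) writes the tail as
`-S_{n-1} η_n^{-q} + ∑_{i ≥ n} S_i (η_i^{-q} - η_{i+1}^{-q})`, the boundary term at infinity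
vanishing because `η_i → ∞`. Since `|S_i| ≤ A η_i^b` with `b < q`, each summand is at most a
constant multiple of `η_i^{b-q} - η_{i+1}^{b-q}` (a discrete form of comparing with
`∫ x^{b-q-1} dx`), so the sum telescopes to `O(η_n^{b-q})`; the boundary term has the same order
because `η_{n-1}` and `η_n` are comparable.
-/

open Filter Topology Finset

theorem one_sub_rpow_le_max_mul_one_sub_rpow {t q s : ℝ} (ht0 : 0 < t) (ht1 : t ≤ 1)
    (hq : 0 < q) (hs : 0 < s) :
    1 - t ^ q ≤ max 1 (q / s) * (1 - t ^ s) := by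
  rcases le_or_gt q s with hqs | hsq
  · have : t ^ s ≤ t ^ q := Real.rpow_le_rpow_of_exponent_ge ht0 ht1 hqs
    have : 1 ≤ max 1 (q / s) := le_max_left _ _
    nlinarith [Real.rpow_le_one ht0.le ht1 hs.le]
  · -- Bernoulli's inequality for the concave power `T ↦ T ^ (s / q)` at `T = t ^ q`
    have hbern : t ^ s ≤ 1 + s / q * (t ^ q - 1) := by
      have h := rpow_one_add_le_one_add_mul_self (s := t ^ q - 1)
        (by linarith [Real.rpow_pos_of_pos ht0 q]) (div_pos hs hq).le
        ((div_le_one hq).2 hsq.le)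
      rwa [add_sub_cancel, ← Real.rpow_mul ht0.le, mul_div_cancel₀ _ hq.ne'] at h
    have hmax : max 1 (q / s) = q / s := max_eq_right ((one_le_div hs).2 hsq.le)
    rw [hmax, div_mul_eq_mul_div, le_div_iff₀ hs]
    rw [div_mul_eq_mul_div, ← sub_nonneg] at hbern
    have := mul_nonneg hq.le hbern
    field_simp at this
    nlinarith

theorem rpow_mul_sub_inv_rpow_le {x y q b : ℝ} (hx : 0 < x) (hxy : x ≤ y) (hq : 0 < q)
    (hb : b < q) :
    x ^ b * ((x ^ q)⁻¹ - (y ^ q)⁻¹) ≤ max 1 (q / (q - b)) * (x ^ (b - q) - y ^ (b - q)) := by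
  have hy : 0 < y := hx.trans_le hxy
  have hxy' : 0 < x / y := div_pos hx hy
  have hlhs : x ^ b * ((x ^ q)⁻¹ - (y ^ q)⁻¹) = x ^ (b - q) * (1 - (x / y) ^ q) := by
    rw [Real.rpow_sub hx, Real.div_rpow hx.le hy.le]
    have := Real.rpow_pos_of_pos hx q
    have := Real.rpow_pos_of_pos hy q
    field_simp
  have hrhs : x ^ (b - q) - y ^ (b - q) = x ^ (b - q) * (1 - (x / y) ^ (q - b)) := by
    rw [Real.div_rpow hx.le hy.le, show b - q = -(q - b) by ring, Real.rpow_neg hx.le,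
      Real.rpow_neg hy.le]
    have := Real.rpow_pos_of_pos hx (q - b)
    have := Real.rpow_pos_of_pos hy (q - b)
    field_simp
  rw [hlhs, hrhs, mul_left_comm]
  exact mul_le_mul_of_nonneg_left
    (one_sub_rpow_le_max_mul_one_sub_rpow hxy' ((div_le_one hy).2 hxy) hq (by linarith))
    (Real.rpow_pos_of_pos hx _).le

theorem rpow_le_rpow_abs_mul_rpow {x y L b : ℝ} (hx : 0 < x) (hxy : x ≤ y) (hyx : y ≤ L * x) :
    x ^ b ≤ L ^ |b| * y ^ b := by
  have hL : 1 ≤ L := by nlinarith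
  rcases le_or_gt 0 b with hb | hb
  · calc x ^ b ≤ y ^ b := Real.rpow_le_rpow hx.le hxy hb
      _ ≤ L ^ |b| * y ^ b :=
        le_mul_of_one_le_left (Real.rpow_nonneg (hx.le.trans hxy) b) (Real.one_le_rpow hL (abs_nonneg b))
  · have hL0 : 0 < L := by linarith
    calc x ^ b ≤ (y / L) ^ b :=
          Real.rpow_le_rpow_of_nonpos (div_pos (hx.trans_le hxy) hL0)
            ((div_le_iff₀ hL0).2 (by linarith)) hb.le
      _ = L ^ |b| * y ^ b := by
        rw [Real.div_rpow (hx.trans_le hxy).le hL0.le, abs_of_neg hb, Real.rpow_neg hL0.le]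
        ring

theorem abs_mul_inv_rpow_le {s x A b q : ℝ} (hx : 0 < x) (hs : |s| ≤ A * x ^ b) :
    |s * (x ^ q)⁻¹| ≤ A * x ^ (b - q) := by
  have hxq := Real.rpow_pos_of_pos hx q
  rw [abs_mul, abs_inv, abs_of_pos hxq, Real.rpow_sub hx, ← mul_div_assoc, ← div_eq_mul_inv]
  exact div_le_div_of_nonneg_right hs hxq.le

theorem abs_mul_sub_inv_rpow_le {s x y A b q : ℝ} (hx : 0 < x) (hxy : x ≤ y) (hq : 0 < q)
    (hb : b < q) (hs : |s| ≤ A * x ^ b) :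
    |s * ((x ^ q)⁻¹ - (y ^ q)⁻¹)| ≤
      A * max 1 (q / (q - b)) * x ^ (b - q) - A * max 1 (q / (q - b)) * y ^ (b - q) := by
  have hA : 0 ≤ A := nonneg_of_mul_nonneg_left ((abs_nonneg s).trans hs) (Real.rpow_pos_of_pos hx b)
  have hd : 0 ≤ (x ^ q)⁻¹ - (y ^ q)⁻¹ :=
    sub_nonneg.2 (inv_anti₀ (Real.rpow_pos_of_pos hx q) (Real.rpow_le_rpow hx.le hxy hq.le))
  calc |s * ((x ^ q)⁻¹ - (y ^ q)⁻¹)| ≤ A * (x ^ b * ((x ^ q)⁻¹ - (y ^ q)⁻¹)) := by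
        rw [abs_mul, abs_of_nonneg hd, ← mul_assoc]
        exact mul_le_mul_of_nonneg_right hs hd
    _ ≤ A * (max 1 (q / (q - b)) * (x ^ (b - q) - y ^ (b - q))) :=
        mul_le_mul_of_nonneg_left (rpow_mul_sub_inv_rpow_le hx hxy hq hb) hA
    _ = _ := by ring

theorem sum_range_succ_sub_mul_eq (S w : ℕ → ℝ) (n m : ℕ) :
    ∑ i ∈ range (m + 1), (S (n + i) - S (n + i - 1)) * w (n + i) =
      S (n + m) * w (n + m) - S (n - 1) * w n +
        ∑ i ∈ range m, S (n + i) * (w (n + i) - w (n + i + 1)) := by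
  induction m with
  | zero => simp only [zero_add, range_one, sum_singleton, add_zero, range_zero, sum_empty]; ring
  | succ m ih =>
    rw [sum_range_succ, ih, sum_range_succ, show n + (m + 1) - 1 = n + m by omega, ← add_assoc]
    ring

theorem abs_tsum_le_of_abs_sum_range_le {f u : ℕ → ℝ} {c : ℝ} (hc : 0 ≤ c)
    (hu : Tendsto u atTop (𝓝 0)) (h : ∀ m, |∑ i ∈ range (m + 1), f i| ≤ u m + c) :
    |∑' i, f i| ≤ c := by
  by_cases hf : Summable f
  · have hlim := (hf.hasSum.tendsto_sum_nat.comp (tendsto_add_atTop_nat 1)).abs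
    simpa using le_of_tendsto_of_tendsto' hlim (hu.add_const c) h
  · simpa [tsum_eq_zero_of_not_summable hf] using hc

theorem abs_tsum_sub_mul_le {S w u g : ℕ → ℝ} {n : ℕ} {c : ℝ} (hc : 0 ≤ c)
    (hu : Tendsto u atTop (𝓝 0)) (hg : ∀ k, 0 ≤ g k)
    (h_last : ∀ k, n ≤ k → |S k * w k| ≤ u k)
    (h_first : |S (n - 1) * w n| ≤ c)
    (h_step : ∀ k, n ≤ k → |S k * (w k - w (k + 1))| ≤ g k - g (k + 1)) :
    |∑' i, (S (n + i) - S (n + i - 1)) * w (n + i)| ≤ c + g n := by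
  have hu' : Tendsto (fun m => u (n + m)) atTop (𝓝 0) := by
    simpa only [add_comm] using (tendsto_add_atTop_iff_nat n).2 hu
  refine abs_tsum_le_of_abs_sum_range_le (add_nonneg hc (hg n)) hu' fun m => ?_
  have hsteps : |∑ i ∈ range m, S (n + i) * (w (n + i) - w (n + i + 1))| ≤ g n - g (n + m) :=
    calc _ ≤ ∑ i ∈ range m, |S (n + i) * (w (n + i) - w (n + i + 1))| := abs_sum_le_sum_abs _ _
      _ ≤ ∑ i ∈ range m, (g (n + i) - g (n + (i + 1))) :=
        sum_le_sum fun i _ => h_step (n + i) (Nat.le_add_right n i)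
      _ = g n - g (n + m) := sum_range_sub' (fun i => g (n + i)) m
  rw [sum_range_succ_sub_mul_eq]
  have := h_last (n + m) (Nat.le_add_right n m)
  have := hg (n + m)
  have := abs_add_three (S (n + m) * w (n + m)) (-(S (n - 1) * w n))
    (∑ i ∈ range m, S (n + i) * (w (n + i) - w (n + i + 1)))
  rw [abs_neg, ← sub_eq_add_neg] at this
  linarith

theorem tendsto_atTop_of_natCast_div_le_sq {η : ℕ → ℝ} {C : ℝ} (hηpos : ∀ n, 0 < η n)
    (hC : 0 < C) (hη : ∀ n : ℕ, 1 ≤ n → (n : ℝ) / C ≤ η n ^ 2) :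
    Tendsto η atTop atTop := by
  have hsq : Tendsto (fun n => η n ^ 2) atTop atTop :=
    tendsto_atTop_mono' atTop (eventually_atTop.2 ⟨1, hη⟩)
      (tendsto_natCast_atTop_atTop.atTop_div_const hC)
  exact (Real.tendsto_sqrt_atTop.comp hsq).congr fun n => Real.sqrt_sq (hηpos n).le

theorem le_two_mul_mul_of_comparable {η : ℕ → ℝ} {C : ℝ} (hηpos : ∀ n, 0 < η n) (hC : 0 < C)
    (hη : ∀ n : ℕ, 1 ≤ n → (n : ℝ) / C ≤ η n ^ 2 ∧ η n ^ 2 ≤ C * n) {n : ℕ} (hn : 1 ≤ n) :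
    η (n + 1) ≤ 2 * C * η n := by
  have hlow := (div_le_iff₀ hC).1 (hη n hn).1
  have hup := (hη (n + 1) (by omega)).2
  have hn' : (1 : ℝ) ≤ n := by exact_mod_cast hn
  push_cast at hup
  refine (pow_le_pow_iff_left₀ (hηpos _).le (by positivity [hηpos n]) two_ne_zero).1 ?_
  nlinarith [sq_nonneg (C * η n)]

theorem abel_summation_tail_estimate_general
    (S : ℕ → ℝ) (hS0 : S 0 = 0)
    (η : ℕ → ℝ) (hηpos : ∀ n, 0 < η n) (hηmono : Monotone η)
    (C : ℝ) (hC : 1 ≤ C)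
    (hηcomp : ∀ n : ℕ, 1 ≤ n → (n : ℝ) / C ≤ (η n) ^ (2 : ℕ) ∧ (η n) ^ (2 : ℕ) ≤ C * n)
    (γ : ℝ) (hγ : 1 / 2 < γ)
    (ε : ℝ) (hε0 : 0 < ε)
    (hSbound : ∃ A : ℝ, 0 < A ∧ ∀ n : ℕ, 1 ≤ n →
      |S n| ≤ A * (η n) ^ ((2 : ℝ) - (4 * γ - 2) * ε)) :
    ∃ B : ℝ, 0 < B ∧ ∀ n : ℕ, 1 ≤ n →
      |∑' i : ℕ, (S (n + i) - S (n + i - 1)) / (η (n + i)) ^ (4 * γ)|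
        ≤ B * (η n) ^ (((2 : ℝ) - 4 * γ) * (1 + ε)) := by
  obtain ⟨A, hA, hSb⟩ := hSbound
  set q := 4 * γ
  set b := (2 : ℝ) - (4 * γ - 2) * ε
  have hq : 0 < q := by linarith
  have hbq : b < q := by nlinarith
  have hC0 : 0 < C := by linarith
  set K := max 1 (q / (q - b))
  set L := (2 * C) ^ |b|
  have hL : 0 < L := Real.rpow_pos_of_pos (by linarith) _
  have hK : 0 < K := lt_max_of_lt_left one_pos
  refine ⟨A * (L + K), by positivity, fun n hn => ?_⟩
  have h_first : |S (n - 1) * (η n ^ q)⁻¹| ≤ A * L * η n ^ (b - q) := by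
    obtain ⟨k, rfl⟩ : ∃ k, n = k + 1 := ⟨n - 1, by omega⟩
    rcases Nat.eq_zero_or_pos k with rfl | hk
    · simpa [hS0] using mul_nonneg (mul_nonneg hA.le hL.le) (Real.rpow_pos_of_pos (hηpos 1) _).le
    refine abs_mul_inv_rpow_le (hηpos _) ((hSb k hk).trans ?_)
    rw [mul_assoc]
    exact mul_le_mul_of_nonneg_left (rpow_le_rpow_abs_mul_rpow (hηpos k) (hηmono k.le_succ)
      (le_two_mul_mul_of_comparable hηpos hC0 hηcomp hk)) hA.le
  have hu : Tendsto (fun k => A * η k ^ (b - q)) atTop (𝓝 0) := by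
    have := ((tendsto_rpow_neg_atTop (y := q - b) (by linarith)).comp
      (tendsto_atTop_of_natCast_div_le_sq hηpos hC0 fun n hn => (hηcomp n hn).1)).const_mul A
    simpa only [neg_sub, mul_zero, Function.comp_def] using this
  rw [show (2 - q) * (1 + ε) = b - q by ring]
  simp only [div_eq_mul_inv]
  refine (abs_tsum_sub_mul_le (S := S) (w := fun k => (η k ^ q)⁻¹)
    (by positivity [hηpos n]) hu
    (fun k => by positivity [hηpos k])
    (fun k hk => abs_mul_inv_rpow_le (hηpos k) (hSb k (hn.trans hk))) h_first
    (fun k hk => abs_mul_sub_inv_rpow_le (hηpos k) (hηmono k.le_succ) hq hbq (hSb k (hn.trans hk)))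
    ).trans_eq (by ring)

/-- Abel summation estimate: if `S 0 = 0`, `η` is positive increasing
with `η_n²` comparable to `n`, `γ > 1/2`, `ε ∈ (0,1)` and `S n = O(η_n^{2-(4γ-2)ε})`,
then the tail sums `S'_n = ∑_{i≥n} (S_i − S_{i-1})/η_i^{4γ}` satisfy
`S'_n = O(η_n^{(2-4γ)(1+ε)})`. -/
theorem abel_summation_tail_estimate
    (S : ℕ → ℝ) (hS0 : S 0 = 0)
    (η : ℕ → ℝ) (hηpos : ∀ n, 0 < η n) (hηmono : Monotone η)
    (C : ℝ) (hC : 1 ≤ C)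
    (hηcomp : ∀ n : ℕ, 1 ≤ n → (n : ℝ) / C ≤ (η n) ^ (2 : ℕ) ∧ (η n) ^ (2 : ℕ) ≤ C * n)
    (γ : ℝ) (hγ : 1 / 2 < γ)
    (ε : ℝ) (hε0 : 0 < ε) (hε1 : ε < 1)
    (hSbound : ∃ A : ℝ, 0 < A ∧ ∀ n : ℕ, 1 ≤ n →
      |S n| ≤ A * (η n) ^ ((2 : ℝ) - (4 * γ - 2) * ε)) :
    ∃ B : ℝ, 0 < B ∧ ∀ n : ℕ, 1 ≤ n →
      |∑' i : ℕ, (S (n + i) - S (n + i - 1)) / (η (n + i)) ^ (4 * γ)|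
        ≤ B * (η n) ^ (((2 : ℝ) - 4 * γ) * (1 + ε)) :=
  abel_summation_tail_estimate_general S hS0 η hηpos hηmono C hC hηcomp γ hγ ε hε0 hSbound
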